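/- arXiv:1005.4523 — 8 statements merged into one kernel-verified Lean document; each statement's English description precedes it below -/
import Mathlib

section
/- Let M be an element of SL₂(F₄), the group of 2×2 matrices of determinant 1 over the field with 4 elements. Then the order of M is: 1 if M is the identity; 2 if trace(M) = 0 and M is not the identity; 3 if trace(M) = 1; and 5 if trace(M) is not in the prime subfield F₂. -/
open Matrix

/-- Cayley–Hamilton for 2×2 matrices of determinant 1. -/
theorem aux_sq_SL2 {F : Type*} [Field F] (A : Matrix (Fin 2) (Fin 2) F) (h : A.det = 1) :
    A * A = A.trace • A - 1 := by
  obtain ⟨a, b, c, d, rfl⟩ : ∃ a b c d, A = !![a, b; c, d] :=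
    ⟨_, _, _, _, Matrix.eta_fin_two A⟩
  rw [Matrix.det_fin_two_of] at h
  ext i j
  fin_cases i <;> fin_cases j <;>
    simp [Matrix.mul_apply, Matrix.trace_fin_two, Fin.sum_univ_two, Matrix.one_apply] <;>
    first | ring1 | linear_combination -h

/-- Orders of elements of `SL₂(F₄)` in terms of their traces: the order is 1 for the
identity, 2 for non-identity matrices of trace 0, 3 for trace 1, and 5 when the trace
does not lie in the prime subfield `F₂`. -/
theorem order_of_SL2_F4 (M : Matrix.SpecialLinearGroup (Fin 2) (GaloisField 2 2)) :
    (M = 1 → orderOf M = 1) ∧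
    (Matrix.trace (M : Matrix (Fin 2) (Fin 2) (GaloisField 2 2)) = 0 → M ≠ 1 →
      orderOf M = 2) ∧
    (Matrix.trace (M : Matrix (Fin 2) (Fin 2) (GaloisField 2 2)) = 1 → orderOf M = 3) ∧
    ((∀ c : ZMod 2,
        algebraMap (ZMod 2) (GaloisField 2 2) c ≠
          Matrix.trace (M : Matrix (Fin 2) (Fin 2) (GaloisField 2 2))) →
      orderOf M = 5) := by
  set F := GaloisField 2 2
  have h2 : (2 : F) = 0 := by
    have := CharP.cast_eq_zero F 2
    simpa using this
  set A : Matrix (Fin 2) (Fin 2) F := (M : Matrix (Fin 2) (Fin 2) F) with hA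
  have hdet : A.det = 1 := M.2
  set t := A.trace with hT
  have e1 : A * A = t • A - 1 := aux_sq_SL2 A hdet
  have hneg : (-1 : Matrix (Fin 2) (Fin 2) F) = 1 := by
    ext i j
    simp only [Matrix.neg_apply]
    fin_cases i <;> fin_cases j <;> simp [Matrix.one_apply] <;> linear_combination -h2
  -- if M = 1 then trace is 0
  have htr_one : (M : SpecialLinearGroup (Fin 2) F) = 1 → t = 0 := by
    intro h
    have : A = 1 := by rw [hA, h]; rfl
    rw [hT, this, Matrix.trace_one]
    simpa using h2
  refine ⟨?_, ?_, ?_, ?_⟩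
  · intro h; simp [h]
  · -- trace 0, order 2
    intro ht hne
    have key : M ^ 2 = 1 := by
      apply Subtype.ext
      rw [Matrix.SpecialLinearGroup.coe_pow, Matrix.SpecialLinearGroup.coe_one, ← hA,
        pow_two, e1, ht, zero_smul, zero_sub]
      simpa using hneg
    exact orderOf_eq_prime key hne
  · -- trace 1, order 3
    intro ht
    have key : M ^ 3 = 1 := by
      apply Subtype.ext
      rw [Matrix.SpecialLinearGroup.coe_pow, Matrix.SpecialLinearGroup.coe_one, ← hA]
      have : A ^ 3 = A * (A * A) := by noncomm_ring
      rw [this, e1, ht, one_smul, mul_sub, e1, ht, one_smul, mul_one, sub_sub_cancel_left]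
      simpa using hneg
    have hne : M ≠ 1 := by
      intro h
      rw [htr_one h] at ht
      exact one_ne_zero ht.symm
    haveI : Fact (Nat.Prime 3) := ⟨by norm_num⟩
    exact orderOf_eq_prime key hne
  · -- trace not in F₂, order 5
    intro ht
    have ht0 : t ≠ 0 := fun h => ht 0 (by simp [h])
    have ht1 : t ≠ 1 := fun h => ht 1 (by simp [h])
    -- t satisfies t² = t + 1
    haveI : Fintype F := Fintype.ofFinite F
    have hcard : Fintype.card F = 4 := by
      have := GaloisField.card 2 2 (by norm_num)
      rw [Nat.card_eq_fintype_card] at this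
      simpa using this
    have h4 : t ^ 4 = t := by
      have := FiniteField.pow_card t
      rwa [hcard] at this
    have hfac : (t * t + t + 1) * (t * (t - 1)) = 0 := by
      linear_combination h4
    have htt : t * t = t + 1 := by
      rcases mul_eq_zero.mp hfac with h | h
      · linear_combination h - (t + 1) * h2
      · rcases mul_eq_zero.mp h with h | h
        · exact absurd h ht0
        · exact absurd (sub_eq_zero.mp h) ht1
    have key : M ^ 5 = 1 := by
      apply Subtype.ext
      rw [Matrix.SpecialLinearGroup.coe_pow, Matrix.SpecialLinearGroup.coe_one, ← hA]
      have h5 : A ^ 5 = A * (A * (A * (A * A))) := by noncomm_ring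
      rw [h5]
      simp only [e1, mul_sub, mul_smul_comm, smul_sub, smul_smul, mul_one]
      match_scalars
      · linear_combination (t * t + t - 1) * htt
      · linear_combination (-t - 1) * htt - h2
    have hne : M ≠ 1 := by
      intro h
      exact ht0 (htr_one h)
    haveI : Fact (Nat.Prime 5) := ⟨by norm_num⟩
    exact orderOf_eq_prime key hne
end

section
/- The group SL₂(F₄) is isomorphic to the alternating group A₅. -/
/-!
`SL₂(K)` acts on the projective line `ℙ¹(K) = K ∪ {∞}` by Möbius transformations. A matrix fixing
`∞`, `0` and `1` is scalar, and in characteristic `2` the only scalar of determinant `1` is `1`,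
so the action is faithful. For `|K| = 4` this embeds `SL₂(K)`, of order `|K|(|K|² - 1) = 60`, into
the symmetric group on the `5` points of `ℙ¹(K)`, as a subgroup of index `2`; the only such
subgroup is `A₅`.
-/

open Function OnePoint

namespace Equiv.Perm

open scoped Nat

theorem range_eq_alternatingGroup_of_injective {G α : Type*} [Group G] [Fintype α]
    [DecidableEq α] {f : G →* Perm α} (hf : Injective f)
    (hcard : 2 * Nat.card G = (Fintype.card α)!) :
    f.range = alternatingGroup α := by
  apply eq_alternatingGroup_of_index_eq_two
  have hG : 0 < Nat.card G :=
    Nat.pos_of_ne_zero fun h ↦ (Nat.factorial_ne_zero _) (by rw [← hcard, h])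
  have h := f.range.card_mul_index
  rw [← Nat.card_congr (MonoidHom.ofInjective hf).toEquiv, Nat.card_perm,
    Nat.card_eq_fintype_card (α := α), ← hcard, mul_comm 2] at h
  exact Nat.eq_of_mul_eq_mul_left hG h

end Equiv.Perm

namespace Matrix.SpecialLinearGroup

section card

variable {n K : Type*} [Fintype n] [DecidableEq n] [Field K]

theorem range_toGL_eq_ker_det :
    (toGL : SpecialLinearGroup n K →* GL n K).range = GeneralLinearGroup.det.ker :=
  SetLike.coe_injective (by rw [MonoidHom.coe_range, range_toGL]; rfl)

theorem card_mul_card_sub_one [Nonempty n] [Finite K] :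
    Nat.card (SpecialLinearGroup n K) * (Nat.card K - 1) = Nat.card (GL n K) := by
  have h := (GeneralLinearGroup.det (n := n) (R := K)).ker.card_mul_index
  rwa [Subgroup.index_ker, MonoidHom.range_eq_top_of_surjective _
      GeneralLinearGroup.det_surjective, Subgroup.card_top, Nat.card_units,
    ← range_toGL_eq_ker_det,
    ← Nat.card_congr (MonoidHom.ofInjective toGL_injective).toEquiv] at h

theorem card_fin_two [Fintype K] :
    Nat.card (SpecialLinearGroup (Fin 2) K) = Fintype.card K * (Fintype.card K ^ 2 - 1) := by
  have hq : 1 < Fintype.card K := Fintype.one_lt_card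
  have h := card_mul_card_sub_one (n := Fin 2) (K := K)
  rw [card_GL_field, Fin.prod_univ_two, Nat.card_eq_fintype_card (α := K)] at h
  apply Nat.eq_of_mul_eq_mul_right (Nat.sub_pos_of_lt hq)
  rw [h, Fin.val_zero, Fin.val_one, pow_zero, pow_one,
    show Fintype.card K ^ 2 - Fintype.card K = Fintype.card K * (Fintype.card K - 1) by
      rw [Nat.mul_sub_one, sq]]
  ring

end card

variable {K : Type*} [Field K] [DecidableEq K]

def toPermOnePoint : SpecialLinearGroup (Fin 2) K →* Equiv.Perm (OnePoint K) :=
  (MulAction.toPermHom (GL (Fin 2) K) (OnePoint K)).comp toGL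

theorem toPermOnePoint_injective [CharP K 2] :
    Injective (toPermOnePoint : SpecialLinearGroup (Fin 2) K →* _) := by
  refine (injective_iff_map_eq_one _).mpr fun g hg ↦ ?_
  have hfix (p : OnePoint K) : toGL g • p = p := congr($hg p)
  have hdet : g 0 0 * g 1 1 - g 0 1 * g 1 0 = 1 := by rw [← Matrix.det_fin_two]; exact g.det_coe
  have hc : g 1 0 = 0 := by simpa using smul_infty_eq_self_iff.mp (hfix ∞)
  have hd : g 1 1 ≠ 0 := by rintro h; simp [hc, h] at hdet
  have hb : g 0 1 = 0 := by simpa [smul_some_eq_ite, hc, hd] using hfix (0 : K)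
  have had : g 0 0 = g 1 1 := by
    simpa [smul_some_eq_ite, hc, hd, hb, div_eq_one_iff_eq] using hfix (1 : K)
  have ha : g 0 0 = 1 := by
    rw [hb, hc, ← had, mul_zero, sub_zero, ← sq] at hdet
    exact CharTwo.sq_inj.mp (hdet.trans (one_pow 2).symm)
  ext i j
  fin_cases i <;> fin_cases j <;> simp [ha, hb, hc, ← had]

theorem nonempty_mulEquiv_alternatingGroup_of_card_eq_four [Fintype K] [CharP K 2]
    (hK : Fintype.card K = 4) :
    Nonempty (SpecialLinearGroup (Fin 2) K ≃* alternatingGroup (Fin 5)) := by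
  have e : OnePoint K ≃ Fin 5 :=
    Fintype.equivFinOfCardEq (Fintype.card_option.trans (by rw [hK]))
  let f := (Equiv.permCongrHom e).toMonoidHom.comp toPermOnePoint
  have hf : Injective f := (Equiv.permCongrHom e).injective.comp toPermOnePoint_injective
  have hrange : f.range = alternatingGroup (Fin 5) :=
    Equiv.Perm.range_eq_alternatingGroup_of_injective hf
      (by rw [card_fin_two, hK, Fintype.card_fin]; rfl)
  exact ⟨(MonoidHom.ofInjective hf).trans (MulEquiv.subgroupCongr hrange)⟩

end Matrix.SpecialLinearGroup

/-- `SL₂(F₄)` is isomorphic to the alternating group `A₅`. -/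
theorem SL2_F4_iso_A5 :
    Nonempty (Matrix.SpecialLinearGroup (Fin 2) (GaloisField 2 2) ≃*
      alternatingGroup (Fin 5)) := by
  classical
  have : Fintype (GaloisField 2 2) := Fintype.ofFinite _
  refine Matrix.SpecialLinearGroup.nonempty_mulEquiv_alternatingGroup_of_card_eq_four ?_
  rw [← Nat.card_eq_fintype_card, GaloisField.card 2 2 two_ne_zero]; rfl
end

section
/- Let n ∈ ℕ, ζₙ a primitive n-th root of unity in ℂ, and m = 2ˢ·k with gcd(k, n) = 1. Then μ(n) ≡ Σ_{j ∈ (ℤ/nℤ)ˣ} ζₙ^{mj} (mod 2), i.e., the sum of the m-th powers of all primitive n-th roots of unity is an integer congruent modulo 2 to the Möbius function μ(n). -/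
/-!
The sum is the Ramanujan sum `c_n(m) = ∑_{d ∣ gcd(m, n)} μ(n/d) d`: detect `gcd(i, n) = 1` by
`∑_{d ∣ gcd(i, n)} μ(d)`, swap the sums, and evaluate the inner sums over multiples of `d` as
geometric sums of the primitive `(n/d)`-th root `ζ^d`. For `m = 2^s k` with `k` prime to `n`,
every divisor `d > 1` of `gcd(m, n)` is a power of two, so modulo 2 only `d = 1` contributes `μ(n)`.
-/

open ArithmeticFunction Finset
open scoped ArithmeticFunction.Moebius

theorem ZMod.sum_units_val {M : Type*} [AddCommMonoid M] (n : ℕ) [NeZero n] (f : ℕ → M) :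
    ∑ j : (ZMod n)ˣ, f (j : ZMod n).val = ∑ i ∈ range n with i.Coprime n, f i := by
  refine sum_bij (fun j _ ↦ (j : ZMod n).val) (fun j _ ↦ ?_) (fun j _ j' _ h ↦ ?_)
    (fun i hi ↦ ?_) fun _ _ ↦ rfl
  · simpa using ⟨ZMod.val_lt _, ZMod.val_coe_unit_coprime j⟩
  · exact Units.ext (ZMod.val_injective n h)
  · rw [mem_filter, mem_range] at hi
    exact ⟨ZMod.unitOfCoprime i hi.2, mem_univ _, by simp [Nat.mod_eq_of_lt hi.1]⟩

theorem Nat.sum_moebius_divisors_filter_dvd {n : ℕ} (hn : n ≠ 0) (i : ℕ) :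
    ∑ d ∈ n.divisors with d ∣ i, μ d = if i.Coprime n then 1 else 0 := by
  have hgcd : {d ∈ n.divisors | d ∣ i} = (i.gcd n).divisors := by
    rw [← Nat.divisors_filter_dvd_of_dvd hn (i.gcd_dvd_right n)]
    refine filter_congr fun d hd ↦ ?_
    simp [Nat.dvd_gcd_iff, (Nat.mem_divisors.1 hd).1]
  rw [hgcd, ← coe_mul_zeta_apply, moebius_mul_coe_zeta, one_apply]

theorem Finset.sum_range_filter_dvd {M : Type*} [AddCommMonoid M] {d n : ℕ} (hdn : d ∣ n)
    (f : ℕ → M) : ∑ i ∈ range n with d ∣ i, f i = ∑ t ∈ range (n / d), f (d * t) := by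
  obtain ⟨q, rfl⟩ := hdn
  rcases Nat.eq_zero_or_pos d with rfl | hd
  · simp
  rw [Nat.mul_div_cancel_left q hd]
  refine sum_nbij' (· / d) (d * ·) (fun i hi ↦ ?_) (fun t ht ↦ ?_) (fun i hi ↦ ?_)
    (fun t _ ↦ Nat.mul_div_cancel_left t hd) fun i hi ↦ ?_
  · simp only [mem_filter, mem_range] at hi ⊢
    exact Nat.div_lt_of_lt_mul hi.1
  · simp only [mem_filter, mem_range] at ht ⊢
    exact ⟨Nat.mul_lt_mul_of_pos_left ht hd, dvd_mul_right d t⟩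
  · exact Nat.mul_div_cancel' (mem_filter.1 hi).2
  · rw [Nat.mul_div_cancel' (mem_filter.1 hi).2]

theorem IsPrimitiveRoot.geom_sum_pow {R : Type*} [CommRing R] [IsDomain R] {ζ : R} {N : ℕ}
    (h : IsPrimitiveRoot ζ N) (a : ℕ) :
    ∑ i ∈ range N, (ζ ^ a) ^ i = if N ∣ a then (N : R) else 0 := by
  split_ifs with ha
  · simp [(h.pow_eq_one_iff_dvd a).2 ha]
  · have hne : ζ ^ a - 1 ≠ 0 := sub_ne_zero.2 fun h1 ↦ ha ((h.pow_eq_one_iff_dvd a).1 h1)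
    have hpow : (ζ ^ a) ^ N = 1 := by rw [← pow_mul, mul_comm, pow_mul, h.pow_eq_one, one_pow]
    exact (mul_eq_zero.1 (by rw [geom_sum_mul, hpow, sub_self])).resolve_right hne

def ramanujanSum (n a : ℕ) : ℤ := ∑ d ∈ n.divisors with d ∣ a, μ (n / d) * d

theorem IsPrimitiveRoot.sum_units_pow_mul_val {R : Type*} [CommRing R] [IsDomain R] {n : ℕ}
    [NeZero n] {ζ : R} (hζ : IsPrimitiveRoot ζ n) (a : ℕ) :
    ∑ j : (ZMod n)ˣ, ζ ^ (a * (j : ZMod n).val) = ramanujanSum n a := by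
  have hn : n ≠ 0 := NeZero.ne n
  have hinner : ∀ d ∈ n.divisors,
      ∑ i ∈ range n with d ∣ i, ζ ^ (a * i) = if n / d ∣ a then ((n / d : ℕ) : R) else 0 := by
    intro d hd
    obtain ⟨hdn, -⟩ := Nat.mem_divisors.1 hd
    have hζd := hζ.pow_of_dvd (ne_zero_of_dvd_ne_zero hn hdn) hdn
    rw [sum_range_filter_dvd hdn, ← hζd.geom_sum_pow a]
    refine sum_congr rfl fun t _ ↦ ?_
    ring
  calc ∑ j : (ZMod n)ˣ, ζ ^ (a * (j : ZMod n).val)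
      = ∑ i ∈ range n, ∑ d ∈ n.divisors with d ∣ i, μ d • ζ ^ (a * i) := by
        rw [ZMod.sum_units_val n (fun i ↦ ζ ^ (a * i)), sum_filter]
        refine sum_congr rfl fun i _ ↦ ?_
        rw [← sum_smul, Nat.sum_moebius_divisors_filter_dvd hn]
        split_ifs <;> simp
    _ = ∑ d ∈ n.divisors, μ d • ∑ i ∈ range n with d ∣ i, ζ ^ (a * i) := by
        simp_rw [sum_filter, smul_sum, smul_ite, smul_zero]
        exact sum_comm
    _ = ∑ d ∈ n.divisors, μ (n / (n / d)) • if n / d ∣ a then ((n / d : ℕ) : R) else 0 :=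
        sum_congr rfl fun d hd ↦ by
          rw [hinner d hd, Nat.div_div_self (Nat.mem_divisors.1 hd).1 hn]
    _ = ramanujanSum n a := by
        rw [Nat.sum_div_divisors n fun e ↦ μ (n / e) • if e ∣ a then (e : R) else 0, ramanujanSum,
          sum_filter]
        push_cast
        refine sum_congr rfl fun d _ ↦ ?_
        split_ifs <;> simp [zsmul_eq_mul]

theorem Nat.two_dvd_of_dvd_two_pow_mul {d s k : ℕ} (hd : d ∣ 2 ^ s * k) (hdk : d.Coprime k)
    (hd1 : d ≠ 1) : 2 ∣ d := by
  obtain ⟨i, -, rfl⟩ := (Nat.dvd_prime_pow Nat.prime_two).1 (hdk.dvd_of_dvd_mul_right hd)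
  exact dvd_pow_self 2 fun hi ↦ hd1 (by rw [hi, pow_zero])

theorem two_dvd_ramanujanSum_two_pow_mul_sub_moebius {n k : ℕ} (s : ℕ) (hk : k.Coprime n) :
    2 ∣ ramanujanSum n (2 ^ s * k) - μ n := by
  rcases eq_or_ne n 0 with rfl | hn
  · simp [ramanujanSum]
  have hone : 1 ∈ {d ∈ n.divisors | d ∣ 2 ^ s * k} :=
    mem_filter.2 ⟨Nat.one_mem_divisors.2 hn, one_dvd _⟩
  rw [ramanujanSum, ← add_sum_erase _ _ hone, Nat.div_one, Nat.cast_one, mul_one,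
    add_sub_cancel_left]
  refine dvd_sum fun d hd ↦ Dvd.dvd.mul_left ?_ _
  simp only [mem_erase, mem_filter, Nat.mem_divisors] at hd
  obtain ⟨hd1, ⟨hdn, -⟩, hda⟩ := hd
  exact Int.natCast_dvd_natCast.2
    (Nat.two_dvd_of_dvd_two_pow_mul hda ((hk.coprime_dvd_right hdn).symm) hd1)

/-- Let `z` be a primitive `n`-th root of unity (`n > 0`) and `m = 2ˢ·k` with
`gcd(k,n) = 1`. Then the sum `Σ_{j ∈ (ℤ/nℤ)ˣ} z^{mj}` of the `m`-th powers of the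
primitive `n`-th roots of unity is an integer congruent to `μ(n)` modulo 2. -/
theorem sum_primitive_root_powers_mod_two (n : ℕ) [NeZero n] (z : ℂ)
    (hz : IsPrimitiveRoot z n) (s k m : ℕ) (hm : m = 2 ^ s * k)
    (hk : Nat.gcd k n = 1) :
    ∃ c : ℤ, (∑ j : (ZMod n)ˣ, z ^ (m * ((j : ZMod n).val))) =
      ((moebius n : ℤ) : ℂ) + 2 * (c : ℂ) := by
  obtain ⟨c, hc⟩ := two_dvd_ramanujanSum_two_pow_mul_sub_moebius s hk
  refine ⟨c, ?_⟩
  rw [hm, hz.sum_units_pow_mul_val, eq_add_of_sub_eq' hc, Int.cast_add, Int.cast_mul,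
    Int.cast_ofNat]
end

section
/- Let p ≠ 5 be a prime, q = pʳ, and S ⊂ ℙ³ the Fermat quintic surface {x₀⁵ + x₁⁵ − x₃⁵ − x₄⁵ = 0} over F_q. Then #S(F_q) ≡ 1 + q + q² (mod 4). -/
/-!
The coordinate permutation `γ : [x₀, x₁, x₂, x₃] ↦ [x₂, x₃, x₁, x₀]` has order 4 and preserves
`S`, and every orbit of `γ` through a point not fixed by `γ²` has exactly 4 elements. Hence
`#S(F_q)` is congruent mod 4 to the number of points of `S` fixed by
`γ² : [x₀, x₁, x₂, x₃] ↦ [x₁, x₀, x₃, x₂]`, i.e. of points of the lines `x₁ = ±x₀, x₃ = ±x₂`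
lying on `S`. The line with signs `-` lies on `S`; the line with signs `+` meets `S` where
`2 (x₀⁵ - x₂⁵) = 0`. In characteristic 2 the two lines coincide, giving `q + 1` points;
otherwise they are disjoint, giving `(q + 1) + #μ₅(F_q)` points, and `#μ₅(F_q)` is a power of 5.
Both counts are `1 + q + q²` mod 4.
-/

open Function MulAction Projectivization
open scoped LinearAlgebra.Projectivization

theorem exists_card_rootsOfUnity_eq_pow {M : Type*} [CommMonoid M] [Finite Mˣ] (p : ℕ)
    [Fact p.Prime] : ∃ k, Nat.card (rootsOfUnity p M) = p ^ k :=
  IsPGroup.iff_card.mp fun ζ => ⟨1, Subtype.ext <| by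
    rw [pow_one, Subgroup.coe_pow, (mem_rootsOfUnity p _).mp ζ.2]; rfl⟩

namespace Equiv.Perm

variable {α : Type*} [Finite α]

theorem dvd_card_of_forall_minimalPeriod_eq (σ : Perm α) {m : ℕ}
    (h : ∀ a, minimalPeriod σ a = m) : m ∣ Nat.card α := by
  classical
  have := Fintype.ofFinite α
  rw [Nat.card_congr (selfEquivSigmaOrbits (Subgroup.zpowers σ) α), Nat.card_sigma]
  refine Finset.dvd_sum fun ω _ => ?_
  rw [Nat.card_eq_fintype_card, ← minimalPeriod_eq_card]
  exact (h _).symm.dvd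

theorem card_modEq_card_fixedPoints_pow {p n : ℕ} [Fact p.Prime] {σ : Perm α}
    (hσ : σ ^ p ^ (n + 1) = 1) :
    Nat.card α ≡ Nat.card (fixedPoints ⇑(σ ^ p ^ n)) [MOD p ^ (n + 1)] := by
  classical
  set F := fixedPoints ⇑(σ ^ p ^ n)
  have hF : ∀ a, σ a ∈ Fᶜ ↔ a ∈ Fᶜ := fun a => by
    have hcomm : (σ ^ p ^ n) (σ a) = σ ((σ ^ p ^ n) a) := by
      rw [← Perm.mul_apply, ← Perm.mul_apply, (Commute.self_pow σ _).eq]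
    simp only [F, Set.mem_compl_iff, mem_fixedPoints, IsFixedPt, hcomm, σ.injective.eq_iff]
  have hcompl : p ^ (n + 1) ∣ Nat.card ↥Fᶜ := by
    refine dvd_card_of_forall_minimalPeriod_eq (σ.subtypePerm hF) fun a => ?_
    have hiter : ∀ k, IsPeriodicPt (σ.subtypePerm hF) k a ↔ (σ ^ k) a = a := fun k => by
      simp [IsPeriodicPt, IsFixedPt, ← coe_pow, subtypePerm_pow, Subtype.ext_iff]
    refine minimalPeriod_eq_prime_pow ?_ ?_
    · rw [hiter]; exact a.2
    · rw [hiter, hσ]; rfl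
  rw [← Nat.card_congr (Equiv.sumCompl (· ∈ F)), Nat.card_sum]
  exact ((Nat.modEq_zero_iff_dvd.mpr hcompl).add_left (Nat.card F)).trans (by rw [add_zero])

end Equiv.Perm

namespace FermatQuintic

variable {K : Type*} [Field K]

def form (v : Fin 4 → K) : K := v 0 ^ 5 + v 1 ^ 5 - v 2 ^ 5 - v 3 ^ 5

lemma form_smul (c : K) (v : Fin 4 → K) : form (c • v) = c ^ 5 * form v := by
  simp only [form, Pi.smul_apply, smul_eq_mul]; ring

variable (K) in
def surface : Set (ℙ K (Fin 4 → K)) := {P | form P.rep = 0}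

lemma mk_mem_surface_iff {v : Fin 4 → K} (hv : v ≠ 0) : mk K v hv ∈ surface K ↔ form v = 0 := by
  obtain ⟨a, ha⟩ := exists_smul_eq_mk_rep K v hv
  simp [surface, ← ha, Units.smul_def, form_smul]

variable (K) in
def gamma : (Fin 4 → K) ≃ₗ[K] (Fin 4 → K) := LinearEquiv.funCongrLeft K K c[0, 2, 1, 3]

lemma gamma_apply (v : Fin 4 → K) : gamma K v = ![v 2, v 3, v 1, v 0] := by
  ext i; fin_cases i <;> rfl

lemma gamma_sq_apply (v : Fin 4 → K) : (gamma K ^ 2) v = ![v 1, v 0, v 3, v 2] := by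
  ext i; fin_cases i <;> rfl

lemma gamma_pow_four : gamma K ^ 4 = 1 := by
  ext v i; fin_cases i <;> rfl

lemma form_gamma (v : Fin 4 → K) : form (gamma K v) = -form v := by
  simp only [form, gamma_apply, Matrix.cons_val_zero, Matrix.cons_val_one, Matrix.cons_val]
  ring

lemma gamma_smul_mem_surface_iff (P : ℙ K (Fin 4 → K)) :
    gamma K • P ∈ surface K ↔ P ∈ surface K := by
  induction P using Projectivization.ind with | h v hv =>
  rw [smul_mk, mk_mem_surface_iff, mk_mem_surface_iff, LinearEquiv.smul_def, form_gamma,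
    neg_eq_zero]

variable (K) in
def gammaPerm : Equiv.Perm (surface K) :=
  (MulAction.toPerm (gamma K)).subtypePerm gamma_smul_mem_surface_iff

lemma gammaPerm_pow_apply (n : ℕ) (P : surface K) :
    ((gammaPerm K ^ n) P : ℙ K (Fin 4 → K)) = (gamma K ^ n) • (P : ℙ K (Fin 4 → K)) := by
  induction n with
  | zero => rw [pow_zero, pow_zero, one_smul]; rfl
  | succ n ih => rw [pow_succ', Equiv.Perm.mul_apply, pow_succ', mul_smul, ← ih]; rfl

lemma gammaPerm_pow_four : gammaPerm K ^ 4 = 1 := by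
  ext P; rw [gammaPerm_pow_apply, gamma_pow_four, one_smul]; rfl

variable (K) in
def fixedLocus : Set (ℙ K (Fin 4 → K)) := {P | P ∈ surface K ∧ (gamma K ^ 2) • P = P}

lemma card_fixedPoints_gammaPerm_sq :
    Nat.card (fixedPoints ⇑(gammaPerm K ^ 2)) = Nat.card (fixedLocus K) :=
  Nat.card_congr <| (Equiv.subtypeEquivRight fun P => by
      simp [IsFixedPt, Subtype.ext_iff, gammaPerm_pow_apply]).trans
    (Equiv.subtypeSubtypeEquivSubtypeInter (· ∈ surface K) fun P => (gamma K ^ 2) • P = P)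

lemma gamma_sq_smul_mk_eq_self_iff {v : Fin 4 → K} (hv : v ≠ 0) :
    (gamma K ^ 2) • mk K v hv = mk K v hv ↔
      (v 1 = -v 0 ∧ v 3 = -v 2) ∨ (v 1 = v 0 ∧ v 3 = v 2) := by
  rw [smul_mk, mk_eq_mk_iff]
  constructor
  · rintro ⟨a, ha⟩
    have ha' : (a : K) • v = (gamma K ^ 2) v := ha
    have hsq : ((a : K) * a) • v = (1 : K) • v := by
      rw [mul_smul, ha', ← map_smul, ha', ← LinearEquiv.mul_apply, ← pow_add, gamma_pow_four,
        one_smul]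
      rfl
    have h0 : (a : K) * v 0 = v 1 := by simpa [gamma_sq_apply] using congrFun ha' 0
    have h2 : (a : K) * v 2 = v 3 := by simpa [gamma_sq_apply] using congrFun ha' 2
    rcases mul_self_eq_one_iff.mp (smul_left_injective K hv hsq) with h | h
    · exact .inr ⟨by rw [← h0, h, one_mul], by rw [← h2, h, one_mul]⟩
    · exact .inl ⟨by rw [← h0, h, neg_one_mul], by rw [← h2, h, neg_one_mul]⟩
  · rw [LinearEquiv.smul_def, gamma_sq_apply]
    rintro (⟨h1, h3⟩ | ⟨h1, h3⟩)
    · refine ⟨-1, funext fun i => ?_⟩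
      fin_cases i <;> simp [Units.smul_def, h1, h3]
    · refine ⟨1, funext fun i => ?_⟩
      fin_cases i <;> simp [h1, h3]

lemma mk_mem_fixedLocus_iff {v : Fin 4 → K} (hv : v ≠ 0) :
    mk K v hv ∈ fixedLocus K ↔
      (v 1 = -v 0 ∧ v 3 = -v 2) ∨ (v 1 = v 0 ∧ v 3 = v 2 ∧ 2 * (v 0 ^ 5 - v 2 ^ 5) = 0) := by
  rw [fixedLocus, Set.mem_ofPred_eq, gamma_sq_smul_mk_eq_self_iff, mk_mem_surface_iff, form]
  constructor
  · rintro ⟨h, (⟨h1, h3⟩ | ⟨h1, h3⟩)⟩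
    · exact .inl ⟨h1, h3⟩
    · exact .inr ⟨h1, h3, by rw [h1, h3] at h; linear_combination h⟩
  · rintro (⟨h1, h3⟩ | ⟨h1, h3, h⟩)
    · exact ⟨by rw [h1, h3]; ring, .inl ⟨h1, h3⟩⟩
    · exact ⟨by rw [h1, h3]; linear_combination h, .inr ⟨h1, h3⟩⟩

variable (K) in
def negLineIncl : (Fin 2 → K) →ₗ[K] (Fin 4 → K) where
  toFun w := ![w 0, -w 0, w 1, -w 1]
  map_add' w w' := by ext i; fin_cases i <;> simp [add_comm]
  map_smul' c w := by ext i; fin_cases i <;> simp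

lemma negLineIncl_injective : Injective (negLineIncl K) := by
  intro w w' h
  ext i
  fin_cases i
  · exact congrFun h 0
  · exact congrFun h 2

lemma mk_mem_range_map_negLineIncl_iff {v : Fin 4 → K} (hv : v ≠ 0) :
    mk K v hv ∈ Set.range (map (negLineIncl K) negLineIncl_injective) ↔ v 1 = -v 0 ∧ v 3 = -v 2 := by
  constructor
  · rintro ⟨P, hP⟩
    induction P using Projectivization.ind with | h w hw =>
    obtain ⟨a, rfl⟩ := (mk_eq_mk_iff _ _ _ _ _).mp (hP.symm.trans (map_mk _ _ w hw))
    simp [negLineIncl]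
  · rintro ⟨h1, h3⟩
    have hw : ![v 0, v 2] ≠ 0 := fun h => hv <| funext fun i => by
      have h0 := congrFun h 0
      have h2 := congrFun h 1
      fin_cases i <;> simp_all
    refine ⟨mk K ![v 0, v 2] hw, ?_⟩
    rw [map_mk, mk_eq_mk_iff]
    exact ⟨1, funext fun i => by fin_cases i <;> simp [negLineIncl, h1, h3]⟩

lemma fifthRootVec_ne_zero (ζ : K) : ![1, 1, ζ, ζ] ≠ 0 :=
  fun h => one_ne_zero (congrFun h 0)

def fifthRootPoint (ζ : rootsOfUnity 5 K) : ℙ K (Fin 4 → K) :=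
  mk K ![1, 1, ((ζ : Kˣ) : K), ((ζ : Kˣ) : K)] (fifthRootVec_ne_zero _)

lemma fifthRootPoint_injective : Injective (fifthRootPoint (K := K)) := by
  intro ζ ζ' h
  obtain ⟨a, ha⟩ := (mk_eq_mk_iff _ _ _ _ _).mp h
  have h0 : (a : K) = 1 := by simpa [Units.smul_def] using congrFun ha 0
  have h2 := congrFun ha 2
  simp only [Units.smul_def, h0, one_smul] at h2
  exact Subtype.ext (Units.ext (by simpa using h2.symm))

lemma mk_mem_range_fifthRootPoint_iff {v : Fin 4 → K} (hv : v ≠ 0) :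
    mk K v hv ∈ Set.range (fifthRootPoint (K := K)) ↔
      v 1 = v 0 ∧ v 3 = v 2 ∧ v 0 ^ 5 = v 2 ^ 5 := by
  constructor
  · rintro ⟨ζ, hζ⟩
    obtain ⟨a, rfl⟩ := (mk_eq_mk_iff _ _ _ _ _).mp hζ.symm
    have hζ5 : ((ζ : Kˣ) : K) ^ 5 = 1 := (mem_rootsOfUnity' 5 _).mp ζ.2
    simp [Units.smul_def, mul_pow, hζ5]
  · rintro ⟨h1, h3, h5⟩
    have h0 : v 0 ≠ 0 := fun h0 => hv <| funext fun i => by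
      have h2 : v 2 = 0 := pow_eq_zero_iff (n := 5) (by norm_num) |>.mp (by rw [← h5, h0]; ring)
      fin_cases i <;> simp_all
    have h2 : v 2 ≠ 0 := fun h2 => pow_ne_zero 5 h0 (by rw [h5, h2]; ring)
    let ζ := Units.mk0 (v 2 / v 0) (div_ne_zero h2 h0)
    have hζ : ζ ∈ rootsOfUnity 5 K := by
      rw [mem_rootsOfUnity', Units.val_mk0, div_pow, ← h5, div_self (pow_ne_zero _ h0)]
    refine ⟨⟨ζ, hζ⟩, (mk_eq_mk_iff _ _ _ _ _).mpr ⟨Units.mk0 (v 0)⁻¹ (inv_ne_zero h0), ?_⟩⟩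
    ext i
    fin_cases i <;> simp [ζ, Units.smul_def, h1, h3, h0, div_eq_inv_mul]

lemma fixedLocus_eq_range_of_two_ne_zero (h2 : (2 : K) ≠ 0) :
    fixedLocus K = Set.range (Sum.elim (map (negLineIncl K) negLineIncl_injective) fifthRootPoint) := by
  ext P
  induction P using Projectivization.ind with | h v hv =>
  rw [Set.Sum.elim_range, Set.mem_union, mk_mem_fixedLocus_iff, mk_mem_range_map_negLineIncl_iff,
    mk_mem_range_fifthRootPoint_iff, mul_eq_zero, sub_eq_zero, or_iff_right h2]

lemma fixedLocus_eq_range_of_two_eq_zero (h2 : (2 : K) = 0) :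
    fixedLocus K = Set.range (map (negLineIncl K) negLineIncl_injective) := by
  have hneg (x : K) : -x = x := by linear_combination -x * h2
  ext P
  induction P using Projectivization.ind with | h v hv =>
  rw [mk_mem_fixedLocus_iff, mk_mem_range_map_negLineIncl_iff]
  simp only [hneg, h2, zero_mul, and_true, or_self]

lemma card_projectiveLine [Fintype K] : Nat.card (ℙ K (Fin 2 → K)) = Fintype.card K + 1 := by
  rw [card_of_finrank_two K _ (Module.finrank_fin_fun K), Nat.card_eq_fintype_card]

lemma card_fixedLocus_of_two_eq_zero [Fintype K] (h2 : (2 : K) = 0) :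
    Nat.card (fixedLocus K) = Fintype.card K + 1 := by
  rw [fixedLocus_eq_range_of_two_eq_zero h2, Nat.card_range_of_injective (map_injective _ _),
    card_projectiveLine]

lemma card_fixedLocus_of_two_ne_zero [Fintype K] (h2 : (2 : K) ≠ 0) :
    Nat.card (fixedLocus K) = Fintype.card K + 1 + Nat.card (rootsOfUnity 5 K) := by
  have hdisj (P : ℙ K (Fin 2 → K)) (ζ : rootsOfUnity 5 K) :
      map (negLineIncl K) negLineIncl_injective P ≠ fifthRootPoint ζ := fun h => by
    have := ((mk_mem_range_map_negLineIncl_iff _).mp ⟨P, h⟩).1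
    exact h2 (by linear_combination (by simpa using this : (1 : K) = -1))
  rw [fixedLocus_eq_range_of_two_ne_zero h2, Nat.card_range_of_injective
    ((map_injective _ _).sumElim fifthRootPoint_injective hdisj), Nat.card_sum,
    card_projectiveLine]

end FermatQuintic

open FermatQuintic in
theorem fermat_quintic_points_mod_four_general (q : ℕ)
    (K : Type*) [Field K] [Fintype K] (hK : Fintype.card K = q) :
    Nat.card {P : Projectivization K (Fin 4 → K) //
        (P.rep 0) ^ 5 + (P.rep 1) ^ 5 - (P.rep 2) ^ 5 - (P.rep 3) ^ 5 = 0} % 4 =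
      (1 + q + q ^ 2) % 4 := by
  have hcount : Nat.card (surface K) ≡ Nat.card (fixedLocus K) [MOD 4] :=
    card_fixedPoints_gammaPerm_sq (K := K) ▸
      Equiv.Perm.card_modEq_card_fixedPoints_pow (p := 2) (n := 1) gammaPerm_pow_four
  refine hcount.trans ?_
  subst hK
  by_cases hchar : ringChar K = 2
  · have h2 : (2 : K) = 0 := by exact_mod_cast (ringChar.spec K 2).mpr (hchar ▸ dvd_rfl)
    obtain ⟨m, hm⟩ := Nat.dvd_of_mod_eq_zero (FiniteField.even_card_iff_char_two.mp hchar)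
    have hsq : (2 * m) ^ 2 = 4 * (m * m) := by ring
    rw [card_fixedLocus_of_two_eq_zero h2, hm, Nat.ModEq]
    omega
  · have : Fact (Nat.Prime 5) := ⟨Nat.prime_five⟩
    obtain ⟨k, hk⟩ := exists_card_rootsOfUnity_eq_pow (M := K) 5
    have h5 : 5 ^ k % 4 = 1 := by rw [Nat.pow_mod]; norm_num
    obtain ⟨m, hm⟩ : Odd (Fintype.card K) :=
      Nat.odd_iff.mpr (FiniteField.odd_card_of_char_ne_two hchar)
    have hsq : (2 * m + 1) ^ 2 = 4 * (m * m + m) + 1 := by ring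
    rw [card_fixedLocus_of_two_ne_zero (Ring.two_ne_zero hchar), hk, hm, Nat.ModEq]
    omega

/-- For `p ≠ 5` prime and `q = pʳ`, the Fermat quintic surface
`S = {x₀⁵ + x₁⁵ − x₃⁵ − x₄⁵ = 0} ⊂ ℙ³` over `F_q` satisfies
`#S(F_q) ≡ 1 + q + q² (mod 4)`. -/
theorem fermat_quintic_points_mod_four (p r q : ℕ) (hp : p.Prime) (hp5 : p ≠ 5)
    (hr : 0 < r) (hq : q = p ^ r)
    (K : Type*) [Field K] [Fintype K] (hK : Fintype.card K = q) :
    Nat.card {P : Projectivization K (Fin 4 → K) //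
        (P.rep 0) ^ 5 + (P.rep 1) ^ 5 - (P.rep 2) ^ 5 - (P.rep 3) ^ 5 = 0} % 4 =
      (1 + q + q ^ 2) % 4 :=
  fermat_quintic_points_mod_four_general q K hK
end

section
/- Let p be a prime with p ∉ {2,3,5}, q = pʳ, and C the affine plane curve over F_q defined by P(y,y) = P(z,z), where P(y,z) = (y⁵+z⁵) − 5yz(y²+z²) + 5yz(y+z) + 5(y²+z²) − 5(y+z). Then #C(F_q) ≡ q (mod 4). -/
/-- The Chebyshev-type polynomial
`P(y,z) = (y⁵+z⁵) − 5yz(y²+z²) + 5yz(y+z) + 5(y²+z²) − 5(y+z)`. -/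
def chebP {K : Type*} [CommRing K] (y z : K) : K :=
  (y ^ 5 + z ^ 5) - 5 * y * z * (y ^ 2 + z ^ 2) + 5 * y * z * (y + z)
    + 5 * (y ^ 2 + z ^ 2) - 5 * (y + z)

/-- A finset invariant under two commuting fixed-point-free involutions whose
composite is also fixed-point-free has cardinality divisible by 4. -/
lemma four_dvd_card_of_involutions {α : Type*} [DecidableEq α] (s : Finset α) (g h : α → α)
    (hgs : ∀ x ∈ s, g x ∈ s) (hhs : ∀ x ∈ s, h x ∈ s)
    (hgg : ∀ x ∈ s, g (g x) = x) (hhh : ∀ x ∈ s, h (h x) = x)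
    (hco : ∀ x ∈ s, g (h x) = h (g x))
    (hgf : ∀ x ∈ s, g x ≠ x) (hhf : ∀ x ∈ s, h x ≠ x) (hghf : ∀ x ∈ s, g (h x) ≠ x) :
    4 ∣ s.card := by
  induction s using Finset.strongInduction with
  | _ s ih =>
    rcases s.eq_empty_or_nonempty with rfl | ⟨x, hx⟩
    · simp
    · have hgx := hgs x hx
      have hhx := hhs x hx
      have hghx := hgs _ hhx
      -- pairwise distinctness of the orbit
      have d1 : g x ≠ x := hgf x hx
      have d2 : h x ≠ x := hhf x hx
      have d3 : g (h x) ≠ x := hghf x hx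
      have d4 : g x ≠ h x := by
        intro e
        exact d3 (by rw [← e, hgg x hx])
      have d5 : g x ≠ g (h x) := by
        intro e
        have : x = h x := by
          have := congrArg g e
          rwa [hgg x hx, hgg _ hhx] at this
        exact d2 this.symm
      have d6 : h x ≠ g (h x) := by
        intro e
        have e2 : h (h x) = h (g (h x)) := congrArg h e
        rw [hhh x hx, ← hco (h x) hhx, hhh x hx] at e2
        exact d1 e2.symm
      set Q : Finset α := {x, g x, h x, g (h x)} with hQ
      have hQcard : Q.card = 4 := by
        rw [hQ]
        rw [Finset.card_insert_of_notMem (by simp [d1.symm, d2.symm, d3.symm]),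
          Finset.card_insert_of_notMem (by simp [d4, d5]),
          Finset.card_insert_of_notMem (by simp [d6]), Finset.card_singleton]
      have hQsub : Q ⊆ s := by
        intro y hy
        simp only [hQ, Finset.mem_insert, Finset.mem_singleton] at hy
        rcases hy with rfl | rfl | rfl | rfl <;> assumption
      set t : Finset α := s \ Q with ht
      have htsub : t ⊆ s := Finset.sdiff_subset
      have hts : t ⊂ s := by
        refine Finset.ssubset_iff_of_subset htsub |>.mpr ⟨x, hx, by simp [ht, hQ]⟩
      have hmemt : ∀ y, y ∈ t ↔ y ∈ s ∧ y ≠ x ∧ y ≠ g x ∧ y ≠ h x ∧ y ≠ g (h x) := by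
        intro y
        simp [ht, hQ, and_assoc]
      have hg_t : ∀ y ∈ t, g y ∈ t := by
        intro y hy
        rw [hmemt] at hy ⊢
        obtain ⟨hys, n1, n2, n3, n4⟩ := hy
        refine ⟨hgs y hys, ?_, ?_, ?_, ?_⟩
        · intro e; exact n2 (by rw [← e, hgg y hys])
        · intro e
          have := congrArg g e; rw [hgg y hys, hgg x hx] at this; exact n1 this
        · intro e; exact n4 (by rw [← e, hgg y hys])
        · intro e
          have := congrArg g e; rw [hgg y hys, hgg _ hhx] at this; exact n3 this
      have hh_t : ∀ y ∈ t, h y ∈ t := by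
        intro y hy
        rw [hmemt] at hy ⊢
        obtain ⟨hys, n1, n2, n3, n4⟩ := hy
        refine ⟨hhs y hys, ?_, ?_, ?_, ?_⟩
        · intro e; exact n3 (by rw [← e, hhh y hys])
        · intro e
          have := congrArg h e
          rw [hhh y hys, ← hco x hx] at this
          exact n4 this
        · intro e
          have := congrArg h e; rw [hhh y hys, hhh x hx] at this; exact n1 this
        · intro e
          have := congrArg h e
          rw [hhh y hys, hco x hx, hhh _ hgx] at this
          exact n2 this
      have hcard : s.card = t.card + 4 := by
        have h1 := Finset.card_sdiff_of_subset hQsub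
        have hle := Finset.card_le_card hQsub
        rw [← ht] at h1
        rw [hQcard] at h1 hle
        omega
      have := ih t hts (fun y hy => hg_t y hy) (fun y hy => hh_t y hy)
        (fun y hy => hgg y (htsub hy)) (fun y hy => hhh y (htsub hy))
        (fun y hy => hco y (htsub hy)) (fun y hy => hgf y (htsub hy))
        (fun y hy => hhf y (htsub hy)) (fun y hy => hghf y (htsub hy))
      omega

/-- For `p ∉ {2,3,5}` prime and `q = pʳ`, the affine curve `C : P(y,y) = P(z,z)` over
`F_q` satisfies `#C(F_q) ≡ q (mod 4)`. -/
theorem curve_points_mod_four (p r q : ℕ) (hp : p.Prime) (hp2 : p ≠ 2) (hp3 : p ≠ 3)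
    (hp5 : p ≠ 5) (hr : 0 < r) (hq : q = p ^ r)
    (K : Type*) [Field K] [Fintype K] (hK : Fintype.card K = q) :
    Nat.card {yz : K × K // chebP yz.1 yz.1 = chebP yz.2 yz.2} % 4 = q % 4 := by
  classical
  -- characteristic facts
  haveI := ringChar.charP K
  have hcp : (ringChar K).Prime := CharP.char_is_prime K (ringChar K)
  have hcharp : CharP K p := by
    obtain ⟨n, hn⟩ := FiniteField.card K (ringChar K)
    have : p = ringChar K := by
      have hdvd : p ∣ ringChar K ^ (n : ℕ) := by
        rw [← hn.2, hK, hq]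
        exact dvd_pow_self p hr.ne'
      have := hp.dvd_of_dvd_pow hdvd
      exact ((Nat.prime_dvd_prime_iff_eq hp hcp).mp this)
    rw [this]
    exact ringChar.charP K
  have cast_ne : ∀ n : ℕ, ¬ p ∣ n → (n : K) ≠ 0 := fun n hn =>
    fun h => hn ((CharP.cast_eq_zero_iff K p n).mp h)
  have two_ne : (2 : K) ≠ 0 := by
    have := cast_ne 2 (fun h => hp2 ((Nat.prime_dvd_prime_iff_eq hp Nat.prime_two).mp h))
    exact_mod_cast this
  have three_ne : (3 : K) ≠ 0 := by
    have := cast_ne 3 (fun h => hp3 ((Nat.prime_dvd_prime_iff_eq hp Nat.prime_three).mp h))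
    exact_mod_cast this
  have five_ne : (5 : K) ≠ 0 := by
    have := cast_ne 5 (fun h => hp5 ((Nat.prime_dvd_prime_iff_eq hp (by norm_num)).mp h))
    exact_mod_cast this
  -- key polynomial identities
  have id1 : ∀ t : K, chebP (2 - t) (2 - t) = 4 - chebP t t := by
    intro t; simp only [chebP]; ring
  have id2 : ∀ t : K, chebP t t - chebP (2 - t) (2 - t) =
      4 * (t - 1) * ((t - 1) ^ 4 - 5 * (t - 1) ^ 2 + 5) := by
    intro t; simp only [chebP]; ring
  set S : Finset (K × K) :=
    Finset.univ.filter (fun yz => chebP yz.1 yz.1 = chebP yz.2 yz.2) with hS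
  have hNat : Nat.card {yz : K × K // chebP yz.1 yz.1 = chebP yz.2 yz.2} = S.card := by
    rw [Nat.card_eq_fintype_card, Fintype.card_subtype]
  set A : Finset (K × K) := Finset.univ.filter (fun yz => yz.1 = yz.2) with hA
  set B : Finset (K × K) := Finset.univ.filter
    (fun yz => chebP yz.1 yz.1 = chebP yz.2 yz.2 ∧ yz.1 ≠ yz.2 ∧ yz.1 + yz.2 = 2) with hB
  set D : Finset (K × K) := Finset.univ.filter
    (fun yz => chebP yz.1 yz.1 = chebP yz.2 yz.2 ∧ yz.1 ≠ yz.2 ∧ yz.1 + yz.2 ≠ 2) with hD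
  have hsplit : S.card = A.card + B.card + D.card := by
    have hdisj1 : Disjoint A B := by
      rw [Finset.disjoint_left]
      intro x hx hx'
      simp only [hA, hB, Finset.mem_filter] at hx hx'
      exact hx'.2.2.1 hx.2
    have hdisj2 : Disjoint A D := by
      rw [Finset.disjoint_left]
      intro x hx hx'
      simp only [hA, hD, Finset.mem_filter] at hx hx'
      exact hx'.2.2.1 hx.2
    have hdisj3 : Disjoint B D := by
      rw [Finset.disjoint_left]
      intro x hx hx'
      simp only [hB, hD, Finset.mem_filter] at hx hx'
      exact hx'.2.2.2 hx.2.2.2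
    have hunion : S = A ∪ B ∪ D := by
      ext x
      simp only [hS, hA, hB, hD, Finset.mem_union, Finset.mem_filter, Finset.mem_univ,
        true_and]
      constructor
      · intro hx
        by_cases h1 : x.1 = x.2
        · exact Or.inl (Or.inl h1)
        · by_cases h2 : x.1 + x.2 = 2
          · exact Or.inl (Or.inr ⟨hx, h1, h2⟩)
          · exact Or.inr ⟨hx, h1, h2⟩
      · rintro ((h1 | h2) | h3)
        · rw [h1]
        · exact h2.1
        · exact h3.1
    rw [hunion, Finset.card_union_of_disjoint (by
        rw [Finset.disjoint_union_left]; exact ⟨hdisj2, hdisj3⟩),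
      Finset.card_union_of_disjoint hdisj1]
  have hAcard : A.card = q := by
    have : A = Finset.univ.image (fun y : K => (y, y)) := by
      ext ⟨a, b⟩
      simp only [hA, Finset.mem_filter, Finset.mem_univ, true_and, Finset.mem_image,
        Prod.mk.injEq]
      constructor
      · intro h; exact ⟨a, rfl, h⟩
      · rintro ⟨y, hy1, hy2⟩; rw [← hy1, ← hy2]
    rw [this, Finset.card_image_of_injective _ (fun a b h => (Prod.ext_iff.mp h).1),
      Finset.card_univ, hK]
  have four_ne : (4 : K) ≠ 0 := by
    have h4 : (4 : K) = 2 * 2 := by norm_num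
    rw [h4]; exact mul_ne_zero two_ne two_ne
  have Bmem : ∀ yz : K × K, yz ∈ B ↔
      ((yz.1 - 1) ^ 4 - 5 * (yz.1 - 1) ^ 2 + 5 = 0 ∧ yz.2 = 2 - yz.1) := by
    intro yz
    simp only [hB, Finset.mem_filter, Finset.mem_univ, true_and]
    constructor
    · rintro ⟨hfe, hne, hsum⟩
      have hz : yz.2 = 2 - yz.1 := by linear_combination hsum
      have h0 : 4 * (yz.1 - 1) * ((yz.1 - 1) ^ 4 - 5 * (yz.1 - 1) ^ 2 + 5) = 0 := by
        rw [← id2 yz.1, ← hz, hfe, sub_self]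
      have hv : yz.1 - 1 ≠ 0 := by
        intro h
        apply hne
        have h1 : yz.1 = 1 := by linear_combination h
        rw [h1, hz, h1]; norm_num
      rcases mul_eq_zero.mp h0 with h | h
      · rcases mul_eq_zero.mp h with h' | h'
        · exact absurd h' four_ne
        · exact absurd h' hv
      · exact ⟨h, hz⟩
    · rintro ⟨hroot, hz⟩
      have hv : yz.1 - 1 ≠ 0 := by
        intro h
        apply five_ne
        linear_combination hroot - ((yz.1 - 1) ^ 3 - 5 * (yz.1 - 1)) * h
      have hid := id2 yz.1
      rw [id1 yz.1] at hid
      refine ⟨?_, ?_, by rw [hz]; ring⟩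
      · rw [hz, id1 yz.1]
        linear_combination hid + 4 * (yz.1 - 1) * hroot
      · rw [hz]
        intro e
        apply hv
        have h2 : yz.1 * 2 = 1 * 2 := by linear_combination e
        have := mul_right_cancel₀ two_ne h2
        rw [this]; ring
  have hBcard : 4 ∣ B.card := by
    rcases B.eq_empty_or_nonempty with hBe | ⟨⟨y₀, z₀⟩, hmem⟩
    · rw [hBe]; simp
    · rw [Bmem] at hmem
      obtain ⟨hroot, -⟩ := hmem
      obtain ⟨v, hveq⟩ : ∃ v : K, v = y₀ - 1 := ⟨_, rfl⟩
      rw [← hveq] at hroot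
      have hv0 : v ≠ 0 := by
        intro h
        apply five_ne
        linear_combination hroot - (v ^ 3 - 5 * v) * h
      obtain ⟨w, hw⟩ : ∃ w : K, w * v = 2 * v ^ 2 - 5 :=
        ⟨(2 * v ^ 2 - 5) / v, div_mul_cancel₀ _ hv0⟩
      have hwroot : w ^ 4 - 5 * w ^ 2 + 5 = 0 := by
        have h4 : (w ^ 4 - 5 * w ^ 2 + 5) * v ^ 4 = 0 := by
          linear_combination (16 * v ^ 4 - 100 * v ^ 2 + 125) * hroot +
            (w ^ 3 * v ^ 3 + 2 * w ^ 2 * v ^ 4 - 5 * w ^ 2 * v ^ 2 + 4 * w * v ^ 5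
              - 25 * w * v ^ 3 + 25 * w * v + 8 * v ^ 6 - 70 * v ^ 4 + 175 * v ^ 2 - 125) * hw
        rcases mul_eq_zero.mp h4 with h | h
        · exact h
        · exact absurd h (pow_ne_zero 4 hv0)
      have hvw : v ≠ w := by
        intro e
        have hsq : v ^ 2 = 5 := by linear_combination -v * e - hw
        apply five_ne
        linear_combination hroot - v ^ 2 * hsq
      have hvnw : v ≠ -w := by
        intro e
        have h3 : 3 * v ^ 2 - 5 = 0 := by linear_combination v * e - hw
        apply five_ne
        linear_combination (3 * v ^ 2 - 10) * h3 - 9 * hroot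
      have hw0 : w ≠ 0 := by
        intro e
        have h2 : 2 * v ^ 2 - 5 = 0 := by linear_combination v * e - hw
        apply five_ne
        linear_combination (2 * v ^ 2 - 5) * h2 - 4 * hroot
      have n1 : (1 : K) + v ≠ 1 - v := by
        intro e
        apply hv0
        have h2 : v * 2 = 0 * 2 := by linear_combination e
        simpa using mul_right_cancel₀ two_ne h2
      have n2 : (1 : K) + v ≠ 1 + w := fun e => hvw (by linear_combination e)
      have n3 : (1 : K) + v ≠ 1 - w := fun e => hvnw (by linear_combination e)
      have n4 : (1 : K) - v ≠ 1 + w := fun e => hvnw (by linear_combination -e)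
      have n5 : (1 : K) - v ≠ 1 - w := fun e => hvw (by linear_combination -e)
      have n6 : (1 : K) + w ≠ 1 - w := by
        intro e
        apply hw0
        have h2 : w * 2 = 0 * 2 := by linear_combination e
        simpa using mul_right_cancel₀ two_ne h2
      set E : Finset (K × K) :=
        {(1 + v, 1 - v), (1 - v, 1 + v), (1 + w, 1 - w), (1 - w, 1 + w)} with hE
      have hBE : B = E := by
        ext yz
        rw [Bmem]
        simp only [hE, Finset.mem_insert, Finset.mem_singleton]
        constructor
        · rintro ⟨hr', hz⟩
          have key : (yz.1 - 1 - v) * (yz.1 - 1 + v) * (yz.1 - 1 - w) * (yz.1 - 1 + w)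
              * v ^ 2 = 0 := by
            linear_combination v ^ 2 * hr' -
              ((yz.1 - 1) ^ 2 + 4 * ((yz.1 - 1) ^ 2 - v ^ 2)) * hroot -
              ((yz.1 - 1) ^ 2 - v ^ 2) * (w * v + 2 * v ^ 2 - 5) * hw
          have key2 : (yz.1 - 1 - v) * (yz.1 - 1 + v) * (yz.1 - 1 - w) * (yz.1 - 1 + w)
              = 0 := by
            rcases mul_eq_zero.mp key with h | h
            · exact h
            · exact absurd h (pow_ne_zero 2 hv0)
          have hfst : yz.1 = 1 + v ∨ yz.1 = 1 - v ∨ yz.1 = 1 + w ∨ yz.1 = 1 - w := by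
            rcases mul_eq_zero.mp key2 with h | h
            · rcases mul_eq_zero.mp h with h' | h'
              · rcases mul_eq_zero.mp h' with h'' | h''
                · exact Or.inl (by linear_combination h'')
                · exact Or.inr (Or.inl (by linear_combination h''))
              · exact Or.inr (Or.inr (Or.inl (by linear_combination h')))
            · exact Or.inr (Or.inr (Or.inr (by linear_combination h)))
          have hpair : ∀ c : K, yz.1 = c → yz = (c, 2 - c) := by
            intro c hc
            have : yz.2 = 2 - c := by rw [hz, hc]
            exact Prod.ext hc this
          rcases hfst with h | h | h | h
          · refine Or.inl ?_
            rw [hpair _ h]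
            exact Prod.ext_iff.mpr ⟨rfl, by ring⟩
          · refine Or.inr (Or.inl ?_)
            rw [hpair _ h]
            exact Prod.ext_iff.mpr ⟨rfl, by ring⟩
          · refine Or.inr (Or.inr (Or.inl ?_))
            rw [hpair _ h]
            exact Prod.ext_iff.mpr ⟨rfl, by ring⟩
          · refine Or.inr (Or.inr (Or.inr ?_))
            rw [hpair _ h]
            exact Prod.ext_iff.mpr ⟨rfl, by ring⟩
        · rintro (rfl | rfl | rfl | rfl)
          · exact ⟨by linear_combination hroot, by ring⟩
          · exact ⟨by linear_combination hroot, by ring⟩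
          · exact ⟨by linear_combination hwroot, by ring⟩
          · exact ⟨by linear_combination hwroot, by ring⟩
      have hEcard : E.card = 4 := by
        rw [hE]
        rw [Finset.card_insert_of_notMem (by
            simp only [Finset.mem_insert, Finset.mem_singleton, Prod.mk.injEq, not_or]
            exact ⟨fun h => absurd h.1 n1, fun h => absurd h.1 n2, fun h => absurd h.1 n3⟩),
          Finset.card_insert_of_notMem (by
            simp only [Finset.mem_insert, Finset.mem_singleton, Prod.mk.injEq, not_or]
            exact ⟨fun h => absurd h.1 n4, fun h => absurd h.1 n5⟩),
          Finset.card_insert_of_notMem (by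
            simp only [Finset.mem_singleton, Prod.mk.injEq, not_or]
            exact fun h => absurd h.1 n6),
          Finset.card_singleton]
      rw [hBE, hEcard]
  have hDcard : 4 ∣ D.card := by
    apply four_dvd_card_of_involutions D (fun yz => (yz.2, yz.1))
      (fun yz => (2 - yz.2, 2 - yz.1))
    · intro x hx
      simp only [hD, Finset.mem_filter, Finset.mem_univ, true_and] at hx ⊢
      exact ⟨hx.1.symm, fun e => hx.2.1 e.symm, fun e => hx.2.2 (by linear_combination e)⟩
    · intro x hx
      simp only [hD, Finset.mem_filter, Finset.mem_univ, true_and] at hx ⊢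
      refine ⟨?_, ?_, ?_⟩
      · rw [id1, id1, hx.1]
      · intro e
        exact hx.2.1 (by linear_combination e)
      · intro e
        exact hx.2.2 (by linear_combination -e)
    · intro x _; rfl
    · intro x _
      show ((2 : K) - (2 - x.1), (2 : K) - (2 - x.2)) = x
      rw [Prod.ext_iff]
      constructor <;> · dsimp only; ring
    · intro x _; rfl
    · intro x hx e
      simp only [hD, Finset.mem_filter, Finset.mem_univ, true_and] at hx
      exact hx.2.1 (Prod.ext_iff.mp e).1.symm
    · intro x hx e
      simp only [hD, Finset.mem_filter, Finset.mem_univ, true_and] at hx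
      exact hx.2.2 (by linear_combination -(Prod.ext_iff.mp e).1)
    · intro x hx e
      simp only [hD, Finset.mem_filter, Finset.mem_univ, true_and] at hx
      have e1 : (2 : K) - x.1 = x.1 := (Prod.ext_iff.mp e).1
      have e2 : (2 : K) - x.2 = x.2 := (Prod.ext_iff.mp e).2
      have : x.1 * 2 = 1 * 2 := by linear_combination -e1
      have hx1 : x.1 = 1 := mul_right_cancel₀ two_ne this
      have : x.2 * 2 = 1 * 2 := by linear_combination -e2
      have hx2 : x.2 = 1 := mul_right_cancel₀ two_ne this
      exact hx.2.1 (hx1.trans hx2.symm)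
  rw [hNat, hsplit, hAcard]
  omega
end

section
/- Suppose square matrices ρ₁(g), ρ₂(g) ∈ GL₂ over a ring satisfy: the ℤ₂-span M of {(ρ₁(g), ρ₂(g)) : g ∈ G} ⊆ M₂(O) × M₂(O) is a free ℤ₂-module of rank at most 16, where O is the ring of integers of the unramified quadratic extension of ℚ₂. If R = M/2M is a commutative local Artin F₂-algebra with maximal ideal P = {r ∈ R : r² = 0} and R/P = F₂, then P⁵ = 0. -/
/-- If `R` is a commutative local Artin `F₂`-algebra of `F₂`-dimension at most 16 whose
maximal ideal is `P = {r ∈ R : r² = 0}` with `R/P = F₂`, then `P⁵ = 0`. -/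
theorem fifth_power_of_radical_zero (R : Type*) [CommRing R] [Algebra (ZMod 2) R]
    [Module.Finite (ZMod 2) R] (hdim : Module.finrank (ZMod 2) R ≤ 16)
    (P : Ideal R) (hP : ∀ r : R, r ∈ P ↔ r ^ 2 = 0) (hmax : P.IsMaximal)
    (hres : ∀ r : R, r ∈ P ∨ r - 1 ∈ P) :
    P ^ 5 = ⊥ := by
  -- Key: any product of five elements of P is zero.
  have key : ∀ g : Fin 5 → R, (∀ i, g i ∈ P) → ∏ i, g i = 0 := by
    intro g hg
    by_contra h
    set v : Finset (Fin 5) → R := fun S => ∏ i ∈ S, g i with hv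
    have hzero : ∀ S T : Finset (Fin 5), ¬ Disjoint S T → v S * v T = 0 := by
      intro S T hST
      obtain ⟨i, hiS, hiT⟩ := Finset.not_disjoint_iff.mp hST
      have h2 : g i ^ 2 = 0 := (hP _).1 (hg i)
      have e1 : v S = g i * ∏ j ∈ S.erase i, g j :=
        (Finset.mul_prod_erase S g hiS).symm
      have e2 : v T = g i * ∏ j ∈ T.erase i, g j :=
        (Finset.mul_prod_erase T g hiT).symm
      calc v S * v T
          = g i ^ 2 * ((∏ j ∈ S.erase i, g j) * ∏ j ∈ T.erase i, g j) := by
            rw [e1, e2]; ring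
        _ = 0 := by rw [h2, zero_mul]
    have hli : LinearIndependent (ZMod 2) v := by
      rw [Fintype.linearIndependent_iff]
      intro c hc
      by_contra hcne
      push_neg at hcne
      obtain ⟨S₁, hS₁⟩ := hcne
      obtain ⟨S₀, hS₀mem, hS₀min⟩ :=
        Finset.exists_min_image (Finset.univ.filter (fun S => c S ≠ 0)) Finset.card
          ⟨S₁, by simp [hS₁]⟩
      simp only [Finset.mem_filter, Finset.mem_univ, true_and] at hS₀mem hS₀min
      have hmul : (∑ S, c S • v S) * v S₀ᶜ = 0 := by rw [hc, zero_mul]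
      rw [Finset.sum_mul] at hmul
      have heq : ∀ S, S ≠ S₀ → c S • v S * v S₀ᶜ = 0 := by
        intro S hS
        by_cases hcs : c S = 0
        · simp [hcs]
        · have hnsub : ¬ S ⊆ S₀ := by
            intro hsub
            exact hS (Finset.eq_of_subset_of_card_le hsub
              (hS₀min S (by simp [hcs])))
          obtain ⟨j, hjS, hjS₀⟩ := Finset.not_subset.mp hnsub
          have hnd : ¬ Disjoint S S₀ᶜ :=
            Finset.not_disjoint_iff.mpr ⟨j, hjS, Finset.mem_compl.mpr hjS₀⟩
          rw [smul_mul_assoc, hzero S S₀ᶜ hnd, smul_zero]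
      rw [Finset.sum_eq_single S₀ (fun S _ hS => heq S hS) (by simp)] at hmul
      have hone : c S₀ = 1 := by
        have : ∀ x : ZMod 2, x ≠ 0 → x = 1 := by decide
        exact this _ hS₀mem
      rw [hone, one_smul] at hmul
      have hfull : v S₀ * v S₀ᶜ = ∏ i, g i := Finset.prod_mul_prod_compl S₀ g
      exact h (hfull ▸ hmul)
    have hcard := hli.fintype_card_le_finrank
    rw [Fintype.card_finset, Fintype.card_fin] at hcard
    omega
  -- From the key claim, deduce `P ^ 5 = ⊥`.
  have aux : ∀ (k : ℕ) (J : Ideal R),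
      (∀ g : Fin k → R, (∀ i, g i ∈ P) → ∀ z ∈ J, (∏ i, g i) * z = 0) →
      P ^ k * J ≤ ⊥ := by
    intro k
    induction k with
    | zero =>
      intro J hJ z hz
      rw [pow_zero, one_mul] at hz
      have := hJ ![] (fun i => i.elim0) z hz
      simpa using this
    | succ k ih =>
      intro J hJ
      rw [pow_succ, mul_assoc]
      refine ih (P * J) fun g hg z hz => ?_
      refine Submodule.mul_induction_on hz ?_ ?_
      · intro m hm n hn
        have hcons : ∀ i, (Fin.cons m g : Fin (k + 1) → R) i ∈ P := by
          intro i
          refine Fin.cases ?_ ?_ i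
          · simpa using hm
          · intro j; simpa using hg j
        have := hJ (Fin.cons m g : Fin (k + 1) → R) hcons n hn
        rw [Fin.prod_cons] at this
        calc (∏ i, g i) * (m * n) = (m * ∏ i, g i) * n := by ring
          _ = 0 := this
      · intro x y hx hy
        rw [mul_add, hx, hy, add_zero]
  have h5 : P ^ 5 * ⊤ ≤ ⊥ :=
    aux 5 ⊤ (fun g hg z _ => by rw [key g hg, zero_mul])
  rw [Ideal.mul_top] at h5
  exact le_bot_iff.mp h5
end

section
/- For a prime power q = pʳ with p ∉ {2,3,5}, the number of F_q-points of the affine Consani–Scholten quintic X = {P(x₁,x₂) = P(x₄,x₅)} ⊂ 𝔸⁴ satisfies #X(F_q) ≡ #C(F_q) (mod 4), where C ⊂ 𝔸² is the curve {P(y,y) = P(z,z)}; consequently #X(F_q) ≡ q (mod 4). -/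
open Finset Function

theorem Finset.card_modEq_card_filter_fixed_of_involutive {α : Type*} [DecidableEq α]
    {s : Finset α} {σ : α → α} (hσ : Involutive σ) (hs : ∀ a ∈ s, σ a ∈ s) :
    #s ≡ #{a ∈ s | σ a = a} [MOD 2] := by
  rw [← card_filter_add_card_filter_not (fun a => σ a = a)]
  suffices ((#{a ∈ s | σ a ≠ a} : ℕ) : ZMod 2) = 0 by
    simpa [← ZMod.natCast_eq_natCast_iff] using this
  rw [card_eq_sum_ones, Nat.cast_sum]
  refine sum_involution (fun a _ => σ a) (fun _ _ => by decide)
    (fun a ha _ => (mem_filter.1 ha).2) (fun a ha => ?_) (fun a _ => hσ a)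
  obtain ⟨has, hfix⟩ := mem_filter.1 ha
  exact mem_filter.2 ⟨hs a has, fun h => hfix (hσ.injective h)⟩

theorem Finset.card_filter_eq_sum_card_fiber_sq {α β : Type*} [Fintype α] [Fintype β]
    [DecidableEq β] (f : α → β) :
    #{p : α × α | f p.1 = f p.2} = ∑ c, #{a | f a = c} ^ 2 := by
  rw [card_eq_sum_card_fiberwise (f := fun p => f p.1) (t := univ) (fun _ _ => mem_univ _)]
  refine sum_congr rfl fun c _ => ?_
  rw [sq, ← card_product]
  congr 1
  ext ⟨a, b⟩
  simp only [mem_filter, mem_univ, true_and, mem_product]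
  grind

theorem Nat.sq_modEq_sq_of_modEq_two {a b : ℕ} (h : a ≡ b [MOD 2]) : a ^ 2 ≡ b ^ 2 [MOD 4] := by
  rw [Nat.modEq_iff_dvd] at h ⊢
  obtain ⟨k, hk⟩ := h
  exact ⟨k * (a + k), by push_cast; linear_combination (↑b + ↑a + 2 * k) * hk⟩

theorem sum_sq_modEq_sum_of_involutive {β : Type*} [Fintype β] (w : β → ℕ) {σ : β → β}
    (hσ : Involutive σ) (hw : ∀ c, w (σ c) = w c)
    (hfix : ∀ c, σ c = c → w c ^ 2 ≡ w c [MOD 4]) :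
    ∑ c, w c ^ 2 ≡ ∑ c, w c [MOD 4] := by
  suffices ∑ c, ((w c : ZMod 4) ^ 2 - w c) = 0 by
    rw [← ZMod.natCast_eq_natCast_iff]
    push_cast
    rwa [sum_sub_distrib, sub_eq_zero] at this
  have hpair : ∀ x : ZMod 4, x ^ 2 - x + (x ^ 2 - x) = 0 := by decide
  refine sum_involution (fun c _ => σ c) (fun c _ => by rw [hw]; exact hpair _)
    (fun c _ h hc => h ?_) (fun _ _ => mem_univ _) (fun c _ => hσ c)
  have := (ZMod.natCast_eq_natCast_iff _ _ _).2 (hfix c hc)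
  push_cast at this
  rw [this, sub_self]

theorem card_fiber_modEq_card_diag_fiber {α β : Type*} [Fintype α] [DecidableEq α]
    [DecidableEq β] {F : α → α → β} (hF : ∀ a b, F a b = F b a) (c : β) :
    #{p : α × α | F p.1 p.2 = c} ≡ #{a | F a a = c} [MOD 2] := by
  convert card_modEq_card_filter_fixed_of_involutive (s := {p : α × α | F p.1 p.2 = c})
    (σ := Prod.swap) Prod.swap_swap (fun p hp => by simpa [hF p.2 p.1] using hp) using 1
  have hdiag : ∀ p ∈ ({p ∈ {p : α × α | F p.1 p.2 = c} | p.swap = p} : Finset _),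
      p.2 = p.1 ∧ F p.1 p.1 = c := by
    intro p hp
    simp only [mem_filter, mem_univ, true_and, Prod.swap, Prod.ext_iff] at hp
    exact ⟨hp.2.2.symm, hp.2.2 ▸ hp.1⟩
  exact card_nbij' (fun a => (a, a)) Prod.fst (fun a ha => by simpa using ha)
    (fun p hp => by simpa using (hdiag p hp).2) (fun _ _ => rfl)
    (fun p hp => Prod.ext rfl (hdiag p hp).1.symm)

theorem card_filter_eq_modEq_card_filter_diag {α β : Type*} [Fintype α] [DecidableEq α]
    [Fintype β] [DecidableEq β] {F : α → α → β} (hF : ∀ a b, F a b = F b a) :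
    #{p : (α × α) × (α × α) | F p.1.1 p.1.2 = F p.2.1 p.2.2}
      ≡ #{p : α × α | F p.1 p.1 = F p.2 p.2} [MOD 4] := by
  rw [card_filter_eq_sum_card_fiber_sq (fun p : α × α => F p.1 p.2),
    card_filter_eq_sum_card_fiber_sq (fun a => F a a)]
  exact .sum fun c _ => Nat.sq_modEq_sq_of_modEq_two (card_fiber_modEq_card_diag_fiber hF c)

theorem chebP_comm {R : Type*} [CommRing R] (y z : R) : chebP y z = chebP z y := by
  unfold chebP; ring

theorem chebP_diag_sub_two {R : Type*} [CommRing R] (y : R) :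
    chebP y y - 2 = 2 * ((y - 1) * ((y - 1) ^ 4 - 5 * (y - 1) ^ 2 + 5)) := by
  unfold chebP; ring

theorem chebP_diag_two_sub {R : Type*} [CommRing R] (y : R) :
    chebP (2 - y) (2 - y) = 4 - chebP y y := by
  unfold chebP; ring

section Field

variable {K : Type*} [Field K]

theorem card_pm_pair_eq_four [DecidableEq K] {e f : K} (h2 : (2 : K) ≠ 0) (he : e ≠ 0)
    (hf : f ≠ 0) (hef : e ^ 2 ≠ f ^ 2) : #{e, -e, f, -f} = 4 := by
  have hne : ∀ {x : K}, x ≠ 0 → x ≠ -x := fun {x} hx h => hx (by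
    simpa [h2] using (show 2 * x = 0 by linear_combination h))
  have hsq : ∀ {x y : K}, x ^ 2 ≠ y ^ 2 → x ≠ y ∧ x ≠ -y := fun h =>
    ⟨fun e => h (by rw [e]), fun e => h (by rw [e]; ring)⟩
  obtain ⟨hef₁, hef₂⟩ := hsq hef
  obtain ⟨hef₃, hef₄⟩ := hsq (x := -e) (y := f) (by simpa using hef)
  rw [card_insert_of_notMem (by simp [hne he, hef₁, hef₂]),
    card_insert_of_notMem (by simp [hef₃, hef₄]), card_pair (hne hf)]

theorem quartic_eq_prod_of_roots {e f : K} (hsum : e ^ 2 + f ^ 2 = 5)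
    (hprod : e ^ 2 * f ^ 2 = 5) (x : K) :
    x ^ 4 - 5 * x ^ 2 + 5 = (x - e) * (x + e) * ((x - f) * (x + f)) := by
  linear_combination x ^ 2 * hsum - hprod

theorem four_dvd_card_quartic_roots [Fintype K] [DecidableEq K] (h2 : (2 : K) ≠ 0)
    (h5 : (5 : K) ≠ 0) : 4 ∣ #{u : K | u ^ 4 - 5 * u ^ 2 + 5 = 0} := by
  rcases eq_empty_or_nonempty {u : K | u ^ 4 - 5 * u ^ 2 + 5 = 0} with hR | ⟨e, he⟩
  · simp [hR]
  replace he : e ^ 4 - 5 * e ^ 2 + 5 = 0 := by simpa using he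
  have he0 : e ≠ 0 := by rintro rfl; exact h5 (by linear_combination he)
  -- `(2e² - 5)² = 5`, so `f = √5 / e`
  set f := (2 * e ^ 2 - 5) / e
  have hprod : e ^ 2 * f ^ 2 = 5 := by
    simp only [f, div_pow]; field_simp; linear_combination 4 * he
  have hsum : e ^ 2 + f ^ 2 = 5 := by
    simp only [f, div_pow]; field_simp; linear_combination 5 * he
  clear_value f
  have hf0 : f ≠ 0 := fun h => h5 (by simpa [h] using hprod.symm)
  have hef : e ^ 2 ≠ f ^ 2 := fun h => h5 (by
    linear_combination (e ^ 2 - f ^ 2) * h - (e ^ 2 + f ^ 2 + 5) * hsum + 4 * hprod)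
  have hroots : ({u : K | u ^ 4 - 5 * u ^ 2 + 5 = 0} : Finset K) = {e, -e, f, -f} := by
    ext x
    simp [quartic_eq_prod_of_roots hsum hprod, sub_eq_zero, add_eq_zero_iff_eq_neg, or_assoc]
  rw [hroots, card_pm_pair_eq_four h2 he0 hf0 hef]

theorem card_chebP_diag_fiber_two [Fintype K] [DecidableEq K] (h2 : (2 : K) ≠ 0)
    (h5 : (5 : K) ≠ 0) :
    #{y : K | chebP y y = 2} = #{u : K | u ^ 4 - 5 * u ^ 2 + 5 = 0} + 1 := by
  have hshift : #{y : K | chebP y y = 2} = #{u : K | u * (u ^ 4 - 5 * u ^ 2 + 5) = 0} := by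
    refine card_nbij' (· - 1) (· + 1) (fun y hy => ?_) (fun u hu => ?_) (fun y _ => by simp)
      (fun u _ => by simp)
    · simpa [← sub_eq_zero (a := chebP y y), chebP_diag_sub_two, h2] using hy
    · simpa [← sub_eq_zero (a := chebP _ _), chebP_diag_sub_two, h2] using hu
  rw [hshift, ← card_insert_of_notMem (s := {u : K | u ^ 4 - 5 * u ^ 2 + 5 = 0}) (a := 0)
    (by simpa using h5)]
  congr 1
  ext u
  simp

theorem card_chebP_diag_curve_modEq [Fintype K] [DecidableEq K] (h2 : (2 : K) ≠ 0)
    (h5 : (5 : K) ≠ 0) :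
    #{p : K × K | chebP p.1 p.1 = chebP p.2 p.2} ≡ Fintype.card K [MOD 4] := by
  rw [card_filter_eq_sum_card_fiber_sq (fun y : K => chebP y y)]
  have hsymm : ∀ c : K, #{y : K | chebP y y = 4 - c} = #{y : K | chebP y y = c} := fun c =>
    card_nbij' (2 - ·) (2 - ·)
      (fun y hy => by
        simp only [coe_filter, mem_univ, true_and, Set.mem_ofPred_eq, chebP_diag_two_sub] at hy ⊢
        linear_combination -hy)
      (fun y hy => by
        simp only [coe_filter, mem_univ, true_and, Set.mem_ofPred_eq, chebP_diag_two_sub] at hy ⊢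
        linear_combination -hy)
      (fun y _ => sub_sub_cancel 2 y) (fun y _ => sub_sub_cancel 2 y)
  have hfix : ∀ c : K, 4 - c = c →
      #{y : K | chebP y y = c} ^ 2 ≡ #{y : K | chebP y y = c} [MOD 4] := by
    intro c hc
    obtain rfl : c = 2 := mul_left_cancel₀ h2 (by linear_combination -hc)
    have h1 : #{y : K | chebP y y = 2} ≡ 1 [MOD 4] := by
      obtain ⟨k, hk⟩ := four_dvd_card_quartic_roots h2 h5
      rw [card_chebP_diag_fiber_two h2 h5, hk]
      simp [Nat.ModEq]
    exact (h1.pow 2).trans h1.symm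
  refine (sum_sq_modEq_sum_of_involutive _ (σ := (4 - ·)) (sub_sub_cancel 4) hsymm hfix).trans ?_
  rw [← card_eq_sum_card_fiberwise (fun _ _ => mem_univ _), card_univ]

end Field

theorem natCard_quintic_eq (R : Type*) [CommRing R] [Fintype R] [DecidableEq R] :
    Nat.card {x : Fin 4 → R // chebP (x 0) (x 1) = chebP (x 2) (x 3)}
      = #{p : (R × R) × (R × R) | chebP p.1.1 p.1.2 = chebP p.2.1 p.2.2} := by
  let e : {x : Fin 4 → R // chebP (x 0) (x 1) = chebP (x 2) (x 3)}
      ≃ {p : (R × R) × (R × R) // chebP p.1.1 p.1.2 = chebP p.2.1 p.2.2} :=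
    { toFun := fun x => ⟨((x.1 0, x.1 1), (x.1 2, x.1 3)), x.2⟩
      invFun := fun p => ⟨![p.1.1.1, p.1.1.2, p.1.2.1, p.1.2.2], p.2⟩
      left_inv := fun x => Subtype.ext (by funext i; fin_cases i <;> rfl)
      right_inv := fun p => rfl }
  rw [Nat.card_congr e, Nat.card_eq_fintype_card, Fintype.card_subtype]

theorem affine_quintic_points_mod_four_general (p r q : ℕ) (hp : p.Prime) (hp2 : p ≠ 2)
    (hp5 : p ≠ 5) (hq : q = p ^ r)
    (K : Type*) [Field K] [Fintype K] (hK : Fintype.card K = q) :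
    Nat.card {x : Fin 4 → K // chebP (x 0) (x 1) = chebP (x 2) (x 3)} % 4 =
      Nat.card {yz : K × K // chebP yz.1 yz.1 = chebP yz.2 yz.2} % 4 ∧
    Nat.card {x : Fin 4 → K // chebP (x 0) (x 1) = chebP (x 2) (x 3)} % 4 = q % 4 := by
  classical
  have : Fact p.Prime := ⟨hp⟩
  have : CharP K p := charP_of_card_eq_prime_pow (hK.trans hq)
  have h2 : (2 : K) ≠ 0 := by
    exact_mod_cast CharP.cast_ne_zero_of_ne_of_prime K Nat.prime_two hp2
  have h5 : (5 : K) ≠ 0 := by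
    exact_mod_cast CharP.cast_ne_zero_of_ne_of_prime K (by norm_num) hp5
  have hX : Nat.card {x : Fin 4 → K // chebP (x 0) (x 1) = chebP (x 2) (x 3)}
      ≡ Nat.card {yz : K × K // chebP yz.1 yz.1 = chebP yz.2 yz.2} [MOD 4] := by
    rw [natCard_quintic_eq, Nat.card_eq_fintype_card, Fintype.card_subtype]
    exact card_filter_eq_modEq_card_filter_diag chebP_comm
  have hC : Nat.card {yz : K × K // chebP yz.1 yz.1 = chebP yz.2 yz.2} ≡ q [MOD 4] := by
    rw [Nat.card_eq_fintype_card, Fintype.card_subtype, ← hK]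
    exact card_chebP_diag_curve_modEq h2 h5
  exact ⟨hX, hX.trans hC⟩

/-- For `q = pʳ` with `p ∉ {2,3,5}` prime, the affine Consani–Scholten quintic
`X = {P(x₁,x₂) = P(x₄,x₅)} ⊂ 𝔸⁴` satisfies `#X(F_q) ≡ #C(F_q) (mod 4)` where
`C = {P(y,y) = P(z,z)} ⊂ 𝔸²`, and consequently `#X(F_q) ≡ q (mod 4)`. -/
theorem affine_quintic_points_mod_four (p r q : ℕ) (hp : p.Prime) (hp2 : p ≠ 2)
    (hp3 : p ≠ 3) (hp5 : p ≠ 5) (hr : 0 < r) (hq : q = p ^ r)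
    (K : Type*) [Field K] [Fintype K] (hK : Fintype.card K = q) :
    Nat.card {x : Fin 4 → K // chebP (x 0) (x 1) = chebP (x 2) (x 3)} % 4 =
      Nat.card {yz : K × K // chebP yz.1 yz.1 = chebP yz.2 yz.2} % 4 ∧
    Nat.card {x : Fin 4 → K // chebP (x 0) (x 1) = chebP (x 2) (x 3)} % 4 = q % 4 :=
  affine_quintic_points_mod_four_general p r q hp hp2 hp5 hq K hK
end

section
/- Let Ξ be a finite multiset of complex 8-th roots of unity whose sum h lies in ℤ and such that Σ_{ζ∈Ξ} ζ⁸ = 141 (i.e., Ξ has cardinality 141). Then h is odd. -/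
/-!
Every eighth root of unity is a power of `ζ₈`, and `ℤ[ζ₈] = ℤ[i] + ℤ[i] ζ₈`. Multiplying by `ζ₈`
sends the coordinates `(a, b, c, d)` to `(-d, c, a, b)`, which preserves the parity of
`a + b + c + d`; starting from `1 = (1, 0, 0, 0)`, every eighth root of unity therefore has odd
coordinate sum, and a sum of `N` of them has coordinate sum `≡ N (mod 2)`. Since `ζ₈ = (1 + i)/√2`
and `√2` is irrational, an integer `h` only has the coordinates `(h, 0, 0, 0)`.
-/

open Complex

noncomputable def ζ₈ : ℂ := exp (2 * Real.pi * I / 8)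

lemma isPrimitiveRoot_ζ₈ : IsPrimitiveRoot ζ₈ 8 := by
  simpa [ζ₈] using isPrimitiveRoot_exp 8 (by norm_num)

lemma ζ₈_eq_mk : ζ₈ = ⟨√2 / 2, √2 / 2⟩ := by
  have : 2 * Real.pi * I / 8 = (Real.pi / 4 : ℝ) * I := by push_cast; ring
  rw [ζ₈, this]
  apply Complex.ext
  · rw [exp_ofReal_mul_I_re, Real.cos_pi_div_four]
  · rw [exp_ofReal_mul_I_im, Real.sin_pi_div_four]

lemma ζ₈_sq : ζ₈ ^ 2 = I := by
  have h2 : √2 * √2 = 2 := Real.mul_self_sqrt zero_le_two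
  rw [ζ₈_eq_mk]
  apply Complex.ext
  · simp [sq]
  · simp [sq]; linarith

lemma Irrational.intCast_add_intCast_mul_eq_intCast_iff {x : ℝ} (hx : Irrational x)
    {m n k : ℤ} : (m : ℝ) + n * x = k ↔ m = k ∧ n = 0 := by
  refine ⟨fun h => ?_, by rintro ⟨rfl, rfl⟩; simp⟩
  obtain rfl : n = 0 := by
    by_contra hn
    exact (hx.intCast_mul hn).ne_int (k - m) (by push_cast; linarith)
  exact ⟨by exact_mod_cast (by simpa using h : (m : ℝ) = k), rfl⟩

noncomputable def ofCoords (a b c d : ℤ) : ℂ := a + b * I + (c + d * I) * ζ₈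

lemma ofCoords_add (a b c d a' b' c' d' : ℤ) :
    ofCoords a b c d + ofCoords a' b' c' d' = ofCoords (a + a') (b + b') (c + c') (d + d') := by
  simp only [ofCoords]; push_cast; ring

lemma ofCoords_mul_ζ₈ (a b c d : ℤ) : ofCoords a b c d * ζ₈ = ofCoords (-d) c a b := by
  simp only [ofCoords]; push_cast
  linear_combination (c + d * I) * ζ₈_sq + d * I_sq

lemma ofCoords_re (a b c d : ℤ) : (ofCoords a b c d).re = a + (c - d) * (√2 / 2) := by
  simp [ofCoords, ζ₈_eq_mk]; ring

lemma ofCoords_im (a b c d : ℤ) : (ofCoords a b c d).im = b + (c + d) * (√2 / 2) := by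
  simp [ofCoords, ζ₈_eq_mk]; ring

lemma exists_ofCoords_ζ₈_pow (k : ℕ) :
    ∃ a b c d : ℤ, ζ₈ ^ k = ofCoords a b c d ∧ Odd (a + b + c + d) := by
  induction k with
  | zero => exact ⟨1, 0, 0, 0, by simp [ofCoords], by decide⟩
  | succ k ih =>
    obtain ⟨a, b, c, d, hk, hodd⟩ := ih
    refine ⟨-d, c, a, b, by rw [pow_succ, hk, ofCoords_mul_ζ₈], ?_⟩
    rw [show -d + c + a + b = a + b + c + d - 2 * d by ring]
    exact hodd.sub_even (even_two_mul d)

lemma exists_ofCoords_of_pow_eight_eq_one {w : ℂ} (hw : w ^ 8 = 1) :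
    ∃ a b c d : ℤ, w = ofCoords a b c d ∧ Odd (a + b + c + d) := by
  obtain ⟨k, -, rfl⟩ := isPrimitiveRoot_ζ₈.eq_pow_of_pow_eq_one hw
  exact exists_ofCoords_ζ₈_pow k

lemma exists_ofCoords_sum {Ξ : Multiset ℂ} (hΞ : ∀ w ∈ Ξ, w ^ 8 = 1) :
    ∃ a b c d : ℤ, Ξ.sum = ofCoords a b c d ∧ a + b + c + d ≡ Ξ.card [ZMOD 2] := by
  induction Ξ using Multiset.induction_on with
  | empty => exact ⟨0, 0, 0, 0, by simp [ofCoords], rfl⟩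
  | cons w Ξ ih =>
    obtain ⟨a, b, c, d, hΞsum, hpar⟩ := ih fun x hx => hΞ x (Multiset.mem_cons_of_mem hx)
    obtain ⟨a', b', c', d', hw, hodd⟩ :=
      exists_ofCoords_of_pow_eight_eq_one (hΞ w (Multiset.mem_cons_self w Ξ))
    refine ⟨a' + a, b' + b, c' + c, d' + d, by rw [Multiset.sum_cons, hΞsum, hw, ofCoords_add], ?_⟩
    obtain ⟨k, hk⟩ := hodd
    rw [Int.ModEq] at hpar ⊢
    push_cast [Multiset.card_cons]
    omega

lemma ofCoords_eq_intCast {a b c d n : ℤ} (h : ofCoords a b c d = n) :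
    a = n ∧ b = 0 ∧ c = 0 ∧ d = 0 := by
  have hirr : Irrational (√2 / 2) := irrational_sqrt_two.div_natCast two_ne_zero
  have hre : (a : ℝ) + (c - d : ℤ) * (√2 / 2) = n := by
    rw [Int.cast_sub, ← ofCoords_re, h, intCast_re]
  have him : (b : ℝ) + (c + d : ℤ) * (√2 / 2) = (0 : ℤ) := by
    rw [Int.cast_add, ← ofCoords_im, h, intCast_im, Int.cast_zero]
  rw [hirr.intCast_add_intCast_mul_eq_intCast_iff] at hre him
  omega

/-- Let `Ξ` be a finite multiset of complex 8-th roots of unity whose sum `h` is an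
integer and such that `Σ_{ζ∈Ξ} ζ⁸ = 141` (i.e. `Ξ` has 141 elements). Then `h` is
odd. -/
theorem sum_of_eighth_roots_odd (Ξ : Multiset ℂ) (hroot : ∀ z ∈ Ξ, z ^ 8 = 1)
    (hcard : (Ξ.map fun z => z ^ 8).sum = (141 : ℂ))
    (h : ℤ) (hsum : Ξ.sum = (h : ℂ)) :
    Odd h := by
  obtain ⟨a, b, c, d, hΞ, hpar⟩ := exists_ofCoords_sum hroot
  obtain ⟨rfl, rfl, rfl, rfl⟩ := ofCoords_eq_intCast (hΞ ▸ hsum)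
  have hcard' : Ξ.card = 141 := by
    rw [Multiset.map_congr rfl hroot, Multiset.map_const', Multiset.sum_replicate, nsmul_one] at hcard
    exact_mod_cast hcard
  rw [hcard', Int.ModEq] at hpar
  rw [Int.odd_iff]
  omega
end
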